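/- arXiv:1009.2229 — 3 statements merged into one kernel-verified Lean document; each statement's English description precedes it below -/
import Mathlib

section
/- Let R be a Noetherian ring, M a nonzero Artinian R-module, m a maximal ideal of R in Supp_R(M), and x ∈ m. Then (0 :_{Γ_m(M)} x) ≠ 0, i.e., x has a nonzero annihilator in the m-torsion part of M. -/
/-!
Pick `v ∈ M` with `Ann(v) ⊆ m` (this is what `m ∈ Supp M` means). The chain `m ^ n • Rv` stabilizes
since `M` is Artinian, so `K = m ^ n • Rv` satisfies `K = m • K`; as `R` is Noetherian `K` is finitely
generated and Nakayama gives `r ≡ 1 mod m` with `r • K = 0`. Then `r • v` is nonzero and killed by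
`m ^ n`, and multiplying it by suitable elements of `m` yields a nonzero element killed by `m`, in
particular by `x`.
-/

/-- The `m`-torsion submodule `Γ_m(M) = {x ∈ M | m^n x = 0 for some n}`. -/
def torsionPart (R : Type*) [CommRing R] (M : Type*) [AddCommGroup M] [Module R M]
    (m : Ideal R) : Submodule R M :=
  ⨆ n : ℕ, Submodule.torsionBySet R M ((m ^ n : Ideal R) : Set R)

section

variable {R M : Type*} [CommRing R] [AddCommGroup M] [Module R M]

lemma mem_torsionPart_of_pow_smul_eq_zero {m : Ideal R} {n : ℕ} {u : M}
    (h : ∀ a ∈ m ^ n, a • u = 0) : u ∈ torsionPart R M m :=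
  le_iSup (fun k => Submodule.torsionBySet R M ((m ^ k : Ideal R) : Set R)) n <|
    (Submodule.mem_torsionBySet_iff _ _).mpr fun a => h a a.2

lemma Ideal.exists_ne_zero_smul_eq_zero_of_pow_smul_eq_zero (I : Ideal R) {n : ℕ} {t : M}
    (ht : t ≠ 0) (h : ∀ a ∈ I ^ n, a • t = 0) : ∃ w : M, w ≠ 0 ∧ ∀ a ∈ I, a • w = 0 := by
  induction n generalizing t with
  | zero => exact absurd (by simpa using h 1 (by simp)) ht
  | succ n ih =>
    by_cases hI : ∀ a ∈ I, a • t = 0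
    · exact ⟨t, ht, hI⟩
    push Not at hI
    obtain ⟨a, ha, hat⟩ := hI
    refine ih hat fun b hb => ?_
    rw [smul_smul]
    exact h (b * a) (pow_succ I n ▸ Ideal.mul_mem_mul hb ha)

lemma IsArtinian.exists_pow_smul_le_smul_pow_smul [IsArtinian R M] (I : Ideal R)
    (N : Submodule R M) : ∃ n : ℕ, I ^ n • N ≤ I • (I ^ n • N) := by
  obtain ⟨n, hn⟩ := IsArtinian.monotone_stabilizes
    ⟨fun k => OrderDual.toDual (I ^ k • N),
      fun _ _ hij => Submodule.smul_mono_left (Ideal.pow_le_pow_right hij)⟩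
  refine ⟨n, ?_⟩
  rw [← Submodule.smul_assoc, smul_eq_mul, ← pow_succ']
  exact (congrArg OrderDual.ofDual (hn (n + 1) n.le_succ)).le

lemma IsArtinian.exists_sub_one_mem_and_smul_pow_smul_eq_zero [IsNoetherianRing R]
    [IsArtinian R M] (I : Ideal R) {N : Submodule R M} (hN : N.FG) :
    ∃ n : ℕ, ∃ r : R, r - 1 ∈ I ∧ ∀ u ∈ I ^ n • N, r • u = 0 := by
  obtain ⟨n, hn⟩ := IsArtinian.exists_pow_smul_le_smul_pow_smul I N
  have hfg : (I ^ n • N).FG := hN.of_le Submodule.smul_le_right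
  exact ⟨n, Submodule.exists_sub_one_mem_and_smul_eq_zero_of_fg_of_le_smul I _ hfg hn⟩

end

theorem exists_ne_zero_smul_eq_zero_torsionPart_general
    (R M : Type*) [CommRing R] [IsNoetherianRing R]
    [AddCommGroup M] [Module R M] [IsArtinian R M]
    (m : Ideal R) (hm : m.IsMaximal)
    (hsupp : (⟨m, hm.isPrime⟩ : PrimeSpectrum R) ∈ Module.support R M)
    (x : R) (hx : x ∈ m) :
    ∃ u ∈ torsionPart R M m, u ≠ 0 ∧ x • u = 0 := by
  obtain ⟨v, hv⟩ := (Module.mem_support_iff' (p := ⟨m, hm.isPrime⟩)).mp hsupp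
  obtain ⟨n, r, hr1, hr⟩ := IsArtinian.exists_sub_one_mem_and_smul_pow_smul_eq_zero m
    (Submodule.fg_span_singleton v)
  have hrm : r ∉ m := fun hrm => hm.ne_top <|
    (Ideal.eq_top_iff_one m).mpr (by simpa using m.sub_mem hrm hr1)
  have hrv : ∀ a ∈ m ^ n, a • r • v = 0 := fun a ha => by
    rw [smul_comm]
    exact hr _ (Submodule.smul_mem_smul ha (Submodule.mem_span_singleton_self v))
  obtain ⟨w, hw, hwm⟩ := m.exists_ne_zero_smul_eq_zero_of_pow_smul_eq_zero (hv r hrm) hrv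
  exact ⟨w, mem_torsionPart_of_pow_smul_eq_zero (n := 1) (by simpa using hwm), hw, hwm x hx⟩

/-- Let `R` be a Noetherian ring, `M` a nonzero Artinian `R`-module, `m` a
maximal ideal of `R` in the support of `M`, and `x ∈ m`. Then `x` has a nonzero annihilator in
the `m`-torsion part of `M`. -/
theorem exists_ne_zero_smul_eq_zero_torsionPart
    (R M : Type*) [CommRing R] [IsNoetherianRing R]
    [AddCommGroup M] [Module R M] [IsArtinian R M] [Nontrivial M]
    (m : Ideal R) (hm : m.IsMaximal)
    (hsupp : (⟨m, hm.isPrime⟩ : PrimeSpectrum R) ∈ Module.support R M)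
    (x : R) (hx : x ∈ m) :
    ∃ u ∈ torsionPart R M m, u ≠ 0 ∧ x • u = 0 :=
  exists_ne_zero_smul_eq_zero_torsionPart_general R M m hm hsupp x hx
end

section
/- Let R be a Noetherian ring and M a nonzero Artinian R-module. If I is an ideal of R contained in J(M) = ⋂_{m ∈ Supp_R(M)} m, then (0 :_M I) ≠ 0. -/
/-- `J(M)`, the intersection of all maximal ideals lying in the support of `M`. -/
def suppJacobson (R : Type*) [CommRing R] (M : Type*) [AddCommGroup M] [Module R M] :
    Ideal R :=
  sInf {m : Ideal R | ∃ h : m.IsMaximal,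
    (⟨m, h.isPrime⟩ : PrimeSpectrum R) ∈ Module.support R M}

/-! A nonzero Artinian module has a simple submodule `N`. Its annihilator is a maximal ideal in
the support of `M`, hence contains `J(M) ⊇ I`, and so `N ⊆ (0 :_M I)`. -/

section

variable {R M : Type*} [CommRing R] [AddCommGroup M] [Module R M]

theorem IsSimpleModule.mem_support_annihilator [IsSimpleModule R M] :
    (⟨Module.annihilator R M, annihilator_isMaximal.isPrime⟩ : PrimeSpectrum R) ∈
      Module.support R M := by
  have := IsSimpleModule.nontrivial R M
  obtain ⟨p, hp⟩ := Module.nonempty_support_of_nontrivial (R := R) (M := M)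
  have hp_eq : p = ⟨Module.annihilator R M, annihilator_isMaximal.isPrime⟩ :=
    PrimeSpectrum.ext <| (annihilator_isMaximal.eq_of_le p.isPrime.ne_top
      (Module.annihilator_le_of_mem_support hp)).symm
  rwa [hp_eq] at hp

theorem suppJacobson_le_annihilator (N : Submodule R M) [IsSimpleModule R N] :
    suppJacobson R M ≤ Module.annihilator R N :=
  sInf_le ⟨IsSimpleModule.annihilator_isMaximal,
    Module.support_subset_of_injective N.subtype N.injective_subtype
      IsSimpleModule.mem_support_annihilator⟩

end

theorem torsionBySet_ne_bot_of_le_suppJacobson_general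
    (R M : Type*) [CommRing R]
    [AddCommGroup M] [Module R M] [IsArtinian R M] [Nontrivial M]
    (I : Ideal R) (hI : I ≤ suppJacobson R M) :
    Submodule.torsionBySet R M (I : Set R) ≠ ⊥ := by
  obtain ⟨N, hN⟩ := IsAtomic.exists_atom (Submodule R M)
  have := isSimpleModule_iff_isAtom.mpr hN
  have hNI : N ≤ Submodule.torsionBySet R M I :=
    (Submodule.torsion_gc R M N (OrderDual.toDual I)).mp (hI.trans (suppJacobson_le_annihilator N))
  exact ne_bot_of_le_ne_bot hN.ne_bot hNI

/-- Let `R` be a Noetherian ring and `M` a nonzero Artinian `R`-module. If `I`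
is an ideal of `R` contained in `J(M)`, then `(0 :_M I) ≠ 0`. -/
theorem torsionBySet_ne_bot_of_le_suppJacobson
    (R M : Type*) [CommRing R] [IsNoetherianRing R]
    [AddCommGroup M] [Module R M] [IsArtinian R M] [Nontrivial M]
    (I : Ideal R) (hI : I ≤ suppJacobson R M) :
    Submodule.torsionBySet R M (I : Set R) ≠ ⊥ :=
  torsionBySet_ne_bot_of_le_suppJacobson_general R M I hI
end

section
/- Let R be a Noetherian ring and M an Artinian R-module such that Ann_R(0 :_M p) = p for every prime ideal p ⊇ Ann_R(M). Then for every ideal I of R, the radical of Ann_R(0 :_M I) equals the radical of I + Ann_R(M). -/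
/-!
`Ann_R(0 :_M I)` contains `I + Ann_R M`, which kills `0 :_M I`. Conversely, every prime
`p ⊇ I + Ann_R M` contains `Ann_R(0 :_M I)`: the larger ideal `p` cuts out the smaller submodule
`0 :_M p`, whose annihilator is `p` by hypothesis. Hence both radicals are the intersection of
the same primes.
-/

namespace Submodule

variable {R M : Type*} [CommRing R] [AddCommGroup M] [Module R M]

theorem le_annihilator_torsionBySet (I : Ideal R) :
    I ≤ (torsionBySet R M (I : Set R)).annihilator :=
  (torsion_gc R M).l_u_le I

theorem sup_annihilator_le_annihilator_torsionBySet (I : Ideal R) :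
    I + Module.annihilator R M ≤ (torsionBySet R M (I : Set R)).annihilator :=
  sup_le (le_annihilator_torsionBySet I) <|
    annihilator_top (R := R) (M := M) ▸ annihilator_mono le_top

theorem annihilator_torsionBySet_le_of_le {I p : Ideal R} (hIp : I ≤ p)
    (hp : (torsionBySet R M (p : Set R)).annihilator = p) :
    (torsionBySet R M (I : Set R)).annihilator ≤ p :=
  hp ▸ annihilator_mono (torsionBySet_le_torsionBySet_of_subset hIp)

end Submodule

theorem radical_annihilator_torsionBySet_general
    (R M : Type*) [CommRing R]
    [AddCommGroup M] [Module R M]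
    (h : ∀ p : Ideal R, p.IsPrime → Module.annihilator R M ≤ p →
      (Submodule.torsionBySet R M (p : Set R)).annihilator = p) :
    ∀ I : Ideal R,
      (Submodule.torsionBySet R M (I : Set R)).annihilator.radical
        = (I + Module.annihilator R M).radical := by
  intro I
  refine le_antisymm ?_ <|
    Ideal.radical_mono (Submodule.sup_annihilator_le_annihilator_torsionBySet I)
  rw [Ideal.radical_eq_sInf (I + Module.annihilator R M)]
  refine le_sInf fun p ⟨hIp, hp⟩ ↦ hp.radical_le_iff.mpr ?_
  exact Submodule.annihilator_torsionBySet_le_of_le (le_sup_left.trans hIp)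
    (h p hp (le_sup_right.trans hIp))

/-- Let `R` be a Noetherian ring and `M` an Artinian `R`-module such that
`Ann_R(0 :_M p) = p` for every prime ideal `p ⊇ Ann_R(M)`. Then for every ideal `I` of `R`,
`√(Ann_R(0 :_M I)) = √(I + Ann_R M)`. -/
theorem radical_annihilator_torsionBySet
    (R M : Type*) [CommRing R] [IsNoetherianRing R]
    [AddCommGroup M] [Module R M] [IsArtinian R M]
    (h : ∀ p : Ideal R, p.IsPrime → Module.annihilator R M ≤ p →
      (Submodule.torsionBySet R M (p : Set R)).annihilator = p) :
    ∀ I : Ideal R,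
      (Submodule.torsionBySet R M (I : Set R)).annihilator.radical
        = (I + Module.annihilator R M).radical :=
  radical_annihilator_torsionBySet_general R M h
end
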